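/- Let Q be an n×n positive definite real symmetric matrix and Φ an n×κ real matrix of full column rank κ ≤ n. Then as ν → ∞, (ν Φ Φ' + Q)^{-1} converges to Q^{-1} (I_n − Φ (Φ' Q^{-1} Φ)^{-1} Φ' Q^{-1}). -/

import Mathlib

/-!
By the Woodbury identity, for `ν ≠ 0`,
`(νΦΦ' + Q)⁻¹ = Q⁻¹ - Q⁻¹Φ(ν⁻¹I + Φ'Q⁻¹Φ)⁻¹Φ'Q⁻¹`.
Full column rank makes `Φ` injective, so `Φ'Q⁻¹Φ` is positive definite and hence invertible;
as `ν → ∞` the middle factor therefore tends to `(Φ'Q⁻¹Φ)⁻¹` by continuity of matrix inversion.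
-/

open Matrix Filter Topology

namespace Matrix

theorem mulVec_injective_of_rank_eq_card {m n K : Type*} [Fintype n] [Field K]
    {A : Matrix m n K} (hA : A.rank = Fintype.card n) : Function.Injective A.mulVec :=
  mulVec_injective_iff.2 <| linearIndependent_iff_card_eq_finrank_span.2 <| by
    rw [← hA, rank_eq_finrank_span_cols]; rfl

theorem continuousAt_inv_of_isUnit_det {n K : Type*} [Fintype n] [DecidableEq n] [Field K]
    [TopologicalSpace K] [IsTopologicalDivisionRing K] {A : Matrix n n K} (hA : IsUnit A.det) :
    ContinuousAt Inv.inv A :=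
  continuousAt_matrix_inv A <| by
    simpa only [Ring.inverse_eq_inv'] using continuousAt_inv₀ hA.ne_zero

variable {m n : Type*} [Fintype m] [Fintype n] [DecidableEq m] [DecidableEq n]

theorem inv_smul_mul_add {K : Type*} [Field K] {c : K} (hc : c ≠ 0) {Q : Matrix n n K}
    (hQ : IsUnit Q) (U : Matrix n m K) (V : Matrix m n K)
    (hQUV : IsUnit (c⁻¹ • (1 : Matrix m m K) + V * Q⁻¹ * U)) :
    (c • (U * V) + Q)⁻¹ = Q⁻¹ - Q⁻¹ * U * (c⁻¹ • 1 + V * Q⁻¹ * U)⁻¹ * V * Q⁻¹ := by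
  have hinv : c⁻¹ • 1 * c • (1 : Matrix m m K) = 1 := by
    rw [smul_mul_smul_comm, inv_mul_cancel₀ hc, one_mul, one_smul]
  have hc1 : (c • 1 : Matrix m m K)⁻¹ = c⁻¹ • 1 := inv_eq_left_inv hinv
  have hUV : c • (U * V) = U * (c • 1 : Matrix m m K) * V := by
    rw [Matrix.mul_smul, Matrix.mul_one, Matrix.smul_mul]
  rw [add_comm, hUV, add_mul_mul_inv_eq_sub Q U _ V hQ (.of_mul_eq_one_right _ hinv)
    (by rwa [hc1]), hc1]

theorem tendsto_inv_smul_mul_add {Q : Matrix n n ℝ} (hQ : IsUnit Q) (U : Matrix n m ℝ)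
    (V : Matrix m n ℝ) (hQUV : IsUnit (V * Q⁻¹ * U)) :
    Tendsto (fun c : ℝ => (c • (U * V) + Q)⁻¹) atTop
      (𝓝 (Q⁻¹ - Q⁻¹ * U * (V * Q⁻¹ * U)⁻¹ * V * Q⁻¹)) := by
  set A := V * Q⁻¹ * U
  have hA : Tendsto (fun c : ℝ => c⁻¹ • (1 : Matrix m m ℝ) + A) atTop (𝓝 A) := by
    simpa using ((tendsto_inv_atTop_zero (𝕜 := ℝ)).smul_const (1 : Matrix m m ℝ)).add_const A
  have hAdet : IsUnit A.det := (isUnit_iff_isUnit_det A).1 hQUV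
  have hunit : ∀ᶠ c : ℝ in atTop, IsUnit (c⁻¹ • (1 : Matrix m m ℝ) + A) := by
    have hdet := (continuous_id.matrix_det.tendsto A).comp hA
    filter_upwards [hdet.eventually (isOpen_ne.mem_nhds hAdet.ne_zero)] with c hc
    exact (isUnit_iff_isUnit_det _).2 hc.isUnit
  have hwoodbury : (fun c : ℝ => Q⁻¹ - Q⁻¹ * U * (c⁻¹ • 1 + A)⁻¹ * V * Q⁻¹)
      =ᶠ[atTop] fun c : ℝ => (c • (U * V) + Q)⁻¹ := by
    filter_upwards [hunit, eventually_ne_atTop 0] with c hc hc0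
    exact (inv_smul_mul_add hc0 hQ U V hc).symm
  have hcont : Continuous fun X : Matrix m m ℝ => Q⁻¹ - Q⁻¹ * U * X * V * Q⁻¹ := by fun_prop
  exact (hcont.tendsto _ |>.comp <| (continuousAt_inv_of_isUnit_det hAdet).tendsto.comp hA)
    |>.congr' hwoodbury

end Matrix

theorem diffuse_prior_limit_c_general
    (n κ : ℕ)
    (Q : Matrix (Fin n) (Fin n) ℝ) (hQ : Q.PosDef)
    (Φ : Matrix (Fin n) (Fin κ) ℝ) (hrank : Φ.rank = κ) :
    Tendsto (fun ν : ℝ => (ν • (Φ * Φᵀ) + Q)⁻¹)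
      atTop
      (nhds (Q⁻¹ * ((1 : Matrix (Fin n) (Fin n) ℝ) -
        Φ * (Φᵀ * Q⁻¹ * Φ)⁻¹ * Φᵀ * Q⁻¹))) := by
  have hΦ : Function.Injective Φ.mulVec :=
    mulVec_injective_of_rank_eq_card (by simpa using hrank)
  have hA : (Φᵀ * Q⁻¹ * Φ).PosDef := by
    simpa using hQ.inv.conjTranspose_mul_mul_same hΦ
  simpa only [Matrix.mul_sub, Matrix.mul_one, Matrix.mul_assoc] using
    tendsto_inv_smul_mul_add hQ.isUnit Φ Φᵀ hA.isUnit

/-- Diffuse-prior limit: for `Q` positive definite and `Φ` of full column rank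
`κ ≤ n`, `(νΦΦ' + Q)⁻¹ → Q⁻¹(I - Φ(Φ'Q⁻¹Φ)⁻¹Φ'Q⁻¹)` as `ν → ∞`. -/
theorem diffuse_prior_limit_c
    (n κ : ℕ) (hκn : κ ≤ n)
    (Q : Matrix (Fin n) (Fin n) ℝ) (hQ : Q.PosDef)
    (Φ : Matrix (Fin n) (Fin κ) ℝ) (hrank : Φ.rank = κ) :
    Tendsto (fun ν : ℝ => (ν • (Φ * Φᵀ) + Q)⁻¹)
      atTop
      (nhds (Q⁻¹ * ((1 : Matrix (Fin n) (Fin n) ℝ) -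
        Φ * (Φᵀ * Q⁻¹ * Φ)⁻¹ * Φᵀ * Q⁻¹))) :=
  diffuse_prior_limit_c_general n κ Q hQ Φ hrank
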